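/- Let 1 ≤ ρ < ∞ with conjugate exponent ϱ (1/ρ + 1/ϱ = 1; ϱ = ∞ when ρ = 1). Set r = limsup_{m→∞} ‖A(m)‖_ρ^{1/m} and R = 1/r (R = ∞ if r = 0), and assume R < ∞. Then for every real R₁ > R·n^{(ρ−1)/ρ} there exists h̄ ∈ F^n with ‖h̄‖_ϱ = R₁ such that the power series Σ_{m≥0} x^{(m)}/m!·A(m) is not absolutely convergent at h̄. -/

import Mathlib

open scoped BigOperators ENNReal

noncomputable section

/-- The degree `|α|` of a multi-index `α ∈ ℕ^n`. -/
def mdeg {n : ℕ} (α : Fin n → ℕ) : ℕ := ∑ i, α i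

/-- The factorial `α! = α₁! ⋯ αₙ!` of a multi-index. -/
def mfact {n : ℕ} (α : Fin n → ℕ) : ℕ := ∏ i, (α i).factorial

/-- The multi-indices in `ℕ^n` of degree `p`. -/
abbrev MIdx (n p : ℕ) := {α : Fin n → ℕ // mdeg α = p}

instance (n p : ℕ) : Fintype (MIdx n p) :=
  Fintype.subtype (Finset.Nat.antidiagonalTuple n p) (fun α => by
    simp [Finset.Nat.mem_antidiagonalTuple, mdeg])

/-- The space `M(p,p';F)` of matrices with rows indexed by degree-`p` multi-indices in `ℕ^n`
and columns indexed by degree-`p'` multi-indices in `ℕ^n'`. -/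
abbrev MMat (n n' p p' : ℕ) (F : Type*) := MIdx n p → MIdx n' p' → F

lemma mdeg_sub {n p q : ℕ} (α : MIdx n (p + q)) (β : MIdx n p) (h : ∀ i, β.1 i ≤ α.1 i) :
    mdeg (α.1 - β.1) = q := by
  have h1 : mdeg (α.1 - β.1) + mdeg β.1 = mdeg α.1 := by
    simp only [mdeg, ← Finset.sum_add_distrib]
    exact Finset.sum_congr rfl fun i _ => Nat.sub_add_cancel (h i)
  have h2 := α.2
  have h3 := β.2
  omega

/-- The product `⊙` of `A ∈ M(p,p';F)` and `B ∈ M(q,q';F)`: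
`(A⊙B)_{α,α'} = Σ_{β≤α, β'≤α', |β|=p, |β'|=p'} (α!/(β!(α−β)!)) A_{β,β'} B_{α−β,α'−β'}`. -/
def oprod {n n' p p' q q' : ℕ} {F : Type*} [RCLike F]
    (A : MMat n n' p p' F) (B : MMat n n' q q' F) : MMat n n' (p + q) (p' + q') F :=
  fun α α' =>
    ∑ β : MIdx n p, ∑ β' : MIdx n' p',
      if h : (∀ i, β.1 i ≤ α.1 i) ∧ (∀ j, β'.1 j ≤ α'.1 j) then
        ((mfact α.1 : F) / ((mfact β.1 : F) * (mfact (α.1 - β.1) : F))) * A β β' *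
          B ⟨α.1 - β.1, mdeg_sub α β h.1⟩ ⟨α'.1 - β'.1, mdeg_sub α' β' h.2⟩
      else 0

/-- Change the degree parameter of a multi-index along an equality of natural numbers. -/
def recast {n a b : ℕ} (h : a = b) (α : MIdx n a) : MIdx n b := ⟨α.1, h ▸ α.2⟩

/-- The ordinary matrix product. -/
def mmul {n n' p q q' : ℕ} {F : Type*} [RCLike F]
    (A : MMat n n p q F) (B : MMat n n' q q' F) : MMat n n' p q' F :=
  fun α α' => ∑ β : MIdx n q, A α β * B β α'

/-- The `m`-th `⊙`-power of a row `h ∈ M(0,1;F)`. -/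
def opowRow {n : ℕ} {F : Type*} [RCLike F] (h : MMat n n 0 1 F) : (m : ℕ) → MMat n n 0 m F
  | 0 => fun _ _ => 1
  | m + 1 => fun z α => oprod h (opowRow h m) z (recast (Nat.add_comm m 1) α)

/-- The `m`-th `⊙`-power of a column `v ∈ M(1,0;F)`. -/
def opowCol {n : ℕ} {F : Type*} [RCLike F] (v : MMat n n 1 0 F) : (m : ℕ) → MMat n n m 0 F
  | 0 => fun _ _ => 1
  | m + 1 => fun α z => oprod v (opowCol v m) (recast (Nat.add_comm m 1) α) z

/-- The `⊙`-product `h¹ ⊙ h² ⊙ ⋯ ⊙ hᵐ` of a family of rows `hⁱ ∈ M(0,1;F)`. -/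
def oprodRowFamily {n : ℕ} {F : Type*} [RCLike F] :
    (m : ℕ) → (Fin m → MMat n n 0 1 F) → MMat n n 0 m F
  | 0, _ => fun _ _ => 1
  | m + 1, hs => fun z α =>
      oprod (hs 0) (oprodRowFamily m fun i => hs i.succ) z (recast (Nat.add_comm m 1) α)

/-- The row vector `(h₁,…,hₙ) ∈ M(0,1;F)` determined by `h : Fin n → F`; its entry at the
degree-one column index `α'` is `h^{α'}`. -/
def rowOf {n : ℕ} {F : Type*} [RCLike F] (h : Fin n → F) : MMat n n 0 1 F :=
  fun _ α' => ∏ i, h i ^ α'.1 i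

/-- The column vector `(v₁,…,vₙ) ∈ M(1,0;F)` determined by `v : Fin n → F`. -/
def colOf {n : ℕ} {F : Type*} [RCLike F] (v : Fin n → F) : MMat n n 1 0 F :=
  fun α _ => ∏ i, v i ^ α.1 i

/-- The unit matrix `E_k ∈ M_{n,n}(k,k;F)`. -/
def unitMat (n k : ℕ) (F : Type*) [RCLike F] : MMat n n k k F :=
  fun α β => if α = β then 1 else 0

/-- The `ρ`-norm `‖A‖_ρ = (Σ_{α,α'} |A_{α,α'}|^ρ/(α!(p!p'!)^{ρ−1}))^{1/ρ}` on `M(p,p';F)`. -/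
def rnorm {n n' p p' : ℕ} {F : Type*} [RCLike F] (ρ : ℝ) (A : MMat n n' p p' F) : ℝ :=
  (∑ α : MIdx n p, ∑ α' : MIdx n' p',
      ‖A α α'‖ ^ ρ /
        ((mfact α.1 : ℝ) * ((p.factorial * p'.factorial : ℕ) : ℝ) ^ (ρ - 1))) ^ (1 / ρ)

/-- The `∞`-norm `‖A‖_∞ = sup_{α,α'} |A_{α,α'}| / (p!p'!)` on `M(p,p';F)`. -/
def rnormInf {n n' p p' : ℕ} {F : Type*} [RCLike F] (A : MMat n n' p p' F) : ℝ :=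
  (⨆ x : MIdx n p × MIdx n' p', ‖A x.1 x.2‖) / ((p.factorial * p'.factorial : ℕ) : ℝ)

/-- The `σ`-norm of a vector in `F^n`, for a real exponent `σ`. -/
def vnorm {n : ℕ} {F : Type*} [RCLike F] (σ : ℝ) (h : Fin n → F) : ℝ :=
  (∑ i, ‖h i‖ ^ σ) ^ (1 / σ)

/-- The `σ`-norm of a vector in `F^n`, for an extended real exponent `σ`
(`= max_i |h_i|` when `σ = ∞`). -/
def vnormE {n : ℕ} {F : Type*} [RCLike F] (σ : ℝ≥0∞) (h : Fin n → F) : ℝ :=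
  if σ = ∞ then ⨆ i, ‖h i‖ else (∑ i, ‖h i‖ ^ σ.toReal) ^ (1 / σ.toReal)

/-- Absolute convergence of the power series `Σ_m x^{(m)}/m!·A(m)` at the point `h ∈ F^n`:
for every column index `α'` of degree `q'`, the family `|h^α/α! · A(|α|)_{α,α'}|`, indexed by
all multi-indices `α ∈ ℕ^n`, is summable. -/
def AbsConvAt {n n' q' : ℕ} {F : Type*} [RCLike F]
    (A : (m : ℕ) → MMat n n' m q' F) (h : Fin n → F) : Prop :=
  ∀ α' : MIdx n' q', Summable fun α : Fin n → ℕ =>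
    ‖(∏ i, h i ^ α i) / (mfact α : F) * A (mdeg α) ⟨α, rfl⟩ α'‖

/-- `r = limsup_m ‖A(m)‖_ρ^{1/m}`, the reciprocal of the radius of convergence,
computed in `ℝ≥0∞`. -/
def convRadiusInv {n n' q' : ℕ} {F : Type*} [RCLike F] (ρ : ℝ)
    (A : (m : ℕ) → MMat n n' m q' F) : ℝ≥0∞ :=
  Filter.atTop.limsup fun m : ℕ => ENNReal.ofReal (rnorm ρ (A m)) ^ (1 / (m : ℝ))

/-- `r = limsup_m ‖A(m)‖_∞^{1/m}` computed in `ℝ≥0∞`. -/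
def convRadiusInvInf {n n' q' : ℕ} {F : Type*} [RCLike F]
    (A : (m : ℕ) → MMat n n' m q' F) : ℝ≥0∞ :=
  Filter.atTop.limsup fun m : ℕ => ENNReal.ofReal (rnormInf (A m)) ^ (1 / (m : ℝ))

/-! Take `h̄` constant, `h̄ᵢ = t := R₁ / n^{(ρ-1)/ρ}`, so that `‖h̄‖_ϱ = R₁` and `t > R`.
Absolute convergence at `h̄` bounds each degree-`m` slice of the series:
`t^m Σ_{|α|=m, α'} |A(m)_{α,α'}|/α! ≤ T`. Since `α! ≤ m!` and `ℓ^ρ ≤ ℓ¹`, this weighted `ℓ¹` sum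
dominates `‖A(m)‖_ρ`, so `‖A(m)‖_ρ ≤ T t^{-m}`, whence `r ≤ 1/t`, i.e. `t ≤ R`. -/

open Filter Topology

theorem Finset.sum_rpow_le_rpow_sum {ι : Type*} (s : Finset ι) {f : ι → ℝ}
    (hf : ∀ i ∈ s, 0 ≤ f i) {p : ℝ} (hp : 1 ≤ p) : ∑ i ∈ s, f i ^ p ≤ (∑ i ∈ s, f i) ^ p := by
  induction s using Finset.cons_induction with
  | empty => simp [Real.zero_rpow (by linarith : p ≠ 0)]
  | cons a s ha ih =>
    rw [Finset.forall_mem_cons] at hf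
    rw [Finset.sum_cons, Finset.sum_cons]
    exact (add_le_add le_rfl (ih hf.2)).trans
      (Real.add_rpow_le_rpow_add hf.1 (Finset.sum_nonneg hf.2) hp)

theorem mfact_pos {n : ℕ} (α : Fin n → ℕ) : 0 < mfact α :=
  Finset.prod_pos fun i _ => Nat.factorial_pos (α i)

theorem mfact_dvd_factorial {n p : ℕ} (α : MIdx n p) : mfact α.1 ∣ p.factorial := by
  obtain ⟨α, rfl⟩ := α
  exact Nat.prod_factorial_dvd_factorial_sum Finset.univ α

section RNorm

variable {n n' p p' : ℕ} {F : Type*} [RCLike F] {ρ : ℝ}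

theorem rpow_div_le_div_mfact_rpow (hρ : 1 ≤ ρ) (α : MIdx n p) (x : ℝ) (hx : 0 ≤ x) :
    x ^ ρ / ((mfact α.1 : ℝ) * ((p.factorial * p'.factorial : ℕ) : ℝ) ^ (ρ - 1))
      ≤ (x / mfact α.1) ^ ρ := by
  have hα : (0 : ℝ) < mfact α.1 := by exact_mod_cast mfact_pos α.1
  have hle : (mfact α.1 : ℝ) ≤ ((p.factorial * p'.factorial : ℕ) : ℝ) := by
    exact_mod_cast Nat.le_of_dvd (by positivity) ((mfact_dvd_factorial α).mul_right _)
  have hpow : (mfact α.1 : ℝ) ^ ρ = mfact α.1 * (mfact α.1 : ℝ) ^ (ρ - 1) := by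
    rw [← Real.rpow_one_add' hα.le (by linarith), add_sub_cancel]
  rw [Real.div_rpow hx hα.le, hpow]
  gcongr

theorem rnorm_le_sum_norm_div_mfact (hρ : 1 ≤ ρ) (B : MMat n n' p p' F) :
    rnorm ρ B ≤ ∑ α : MIdx n p, ∑ α' : MIdx n' p', ‖B α α'‖ / mfact α.1 := by
  have hρ0 : 0 < ρ := zero_lt_one.trans_le hρ
  set S := ∑ α : MIdx n p, ∑ α' : MIdx n' p', ‖B α α'‖ / mfact α.1
  have hsum : (∑ α : MIdx n p, ∑ α' : MIdx n' p',
      ‖B α α'‖ ^ ρ / ((mfact α.1 : ℝ) * ((p.factorial * p'.factorial : ℕ) : ℝ) ^ (ρ - 1)))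
      ≤ S ^ ρ :=
    calc _ ≤ ∑ α : MIdx n p, ∑ α' : MIdx n' p', (‖B α α'‖ / mfact α.1) ^ ρ :=
          Finset.sum_le_sum fun α _ => Finset.sum_le_sum fun α' _ =>
            rpow_div_le_div_mfact_rpow hρ α _ (norm_nonneg _)
      _ ≤ ∑ α : MIdx n p, (∑ α' : MIdx n' p', ‖B α α'‖ / mfact α.1) ^ ρ :=
          Finset.sum_le_sum fun α _ =>
            Finset.univ.sum_rpow_le_rpow_sum (fun _ _ => by positivity) hρ
      _ ≤ S ^ ρ := Finset.univ.sum_rpow_le_rpow_sum (fun _ _ => by positivity) hρ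
  calc rnorm ρ B ≤ (S ^ ρ) ^ (1 / ρ) := Real.rpow_le_rpow (by positivity) hsum (by positivity)
    _ = S := by rw [← Real.rpow_mul (by positivity), mul_one_div_cancel hρ0.ne', Real.rpow_one]

end RNorm

theorem limsup_ofReal_rpow_inv_le {a : ℕ → ℝ} {C s : ℝ} (hC : 0 < C) (hs : 0 ≤ s)
    (h : ∀ m, a m ≤ C * s ^ m) :
    limsup (fun m : ℕ => ENNReal.ofReal (a m) ^ (1 / (m : ℝ))) atTop ≤ ENNReal.ofReal s := by
  have hroot : Tendsto (fun m : ℕ => C ^ (1 / (m : ℝ))) atTop (𝓝 1) := by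
    simpa [Function.comp_def] using (Real.continuousAt_const_rpow hC.ne').tendsto.comp
      tendsto_one_div_atTop_nhds_zero_nat
  have hbound : Tendsto (fun m : ℕ => ENNReal.ofReal (C ^ (1 / (m : ℝ)) * s)) atTop
      (𝓝 (ENNReal.ofReal s)) := by
    simpa using ENNReal.tendsto_ofReal (hroot.mul_const s)
  refine (limsup_le_limsup ?_).trans_eq hbound.limsup_eq
  filter_upwards [eventually_ne_atTop 0] with m hm
  have hCs : (C * s ^ m) ^ (1 / (m : ℝ)) = C ^ (1 / (m : ℝ)) * s := by
    rw [Real.mul_rpow hC.le (by positivity), one_div, Real.pow_rpow_inv_natCast hs hm]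
  calc ENNReal.ofReal (a m) ^ (1 / (m : ℝ)) ≤ ENNReal.ofReal (C * s ^ m) ^ (1 / (m : ℝ)) := by
        gcongr; exact h m
    _ = _ := by rw [ENNReal.ofReal_rpow_of_nonneg (by positivity) (by positivity), hCs]

theorem apply_mdeg_eq {n n' q' m : ℕ} {F : Type*} (A : (m : ℕ) → MMat n n' m q' F) (α : MIdx n m)
    (α' : MIdx n' q') : A (mdeg α.1) ⟨α.1, rfl⟩ α' = A m α α' := by
  obtain ⟨α, rfl⟩ := α
  rfl

section AbsConv

variable {n n' q' : ℕ} {F : Type*} [RCLike F]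

theorem norm_prod_const_pow_div_mfact_mul (c : F) (α : Fin n → ℕ) (x : F) :
    ‖(∏ i, c ^ α i) / (mfact α : F) * x‖ = ‖c‖ ^ mdeg α * (‖x‖ / mfact α) := by
  rw [norm_mul, norm_div, norm_prod, RCLike.norm_natCast]
  simp only [norm_pow, Finset.prod_pow_eq_pow_sum, mdeg]
  ring

theorem pow_mul_sum_norm_div_mfact_le_tsum {A : (m : ℕ) → MMat n n' m q' F} {c : F}
    (habs : AbsConvAt A fun _ => c) (m : ℕ) :
    ‖c‖ ^ m * ∑ α : MIdx n m, ∑ α' : MIdx n' q', ‖A m α α'‖ / mfact α.1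
      ≤ ∑' α : Fin n → ℕ, ∑ α' : MIdx n' q',
          ‖(∏ i, c ^ α i) / (mfact α : F) * A (mdeg α) ⟨α, rfl⟩ α'‖ := by
  set g : (Fin n → ℕ) → ℝ := fun α => ∑ α' : MIdx n' q',
    ‖(∏ i, c ^ α i) / (mfact α : F) * A (mdeg α) ⟨α, rfl⟩ α'‖
  have hslice : ‖c‖ ^ m * ∑ α : MIdx n m, ∑ α' : MIdx n' q', ‖A m α α'‖ / mfact α.1
      = ∑ α : MIdx n m, g α.1 := by
    simp only [g, Finset.mul_sum, norm_prod_const_pow_div_mfact_mul, apply_mdeg_eq]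
    refine Finset.sum_congr rfl fun α _ => Finset.sum_congr rfl fun α' _ => ?_
    rw [α.2]
  rw [hslice]
  refine le_of_eq_of_le ?_ (Summable.tsum_subtype_le g {α | mdeg α = m}
    (fun α => Finset.sum_nonneg fun α' _ => norm_nonneg _) (summable_sum fun α' _ => habs α'))
  exact (tsum_fintype (L := .unconditional _) fun α : MIdx n m => g α.1).symm

theorem convRadiusInv_le_of_absConvAt_const {ρ : ℝ} (hρ : 1 ≤ ρ)
    {A : (m : ℕ) → MMat n n' m q' F} {c : F} (hc : c ≠ 0) (habs : AbsConvAt A fun _ => c) :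
    convRadiusInv ρ A ≤ ENNReal.ofReal ‖c‖⁻¹ := by
  set T := ∑' α : Fin n → ℕ, ∑ α' : MIdx n' q',
    ‖(∏ i, c ^ α i) / (mfact α : F) * A (mdeg α) ⟨α, rfl⟩ α'‖
  have hT : 0 ≤ T := tsum_nonneg fun α => Finset.sum_nonneg fun α' _ => norm_nonneg _
  have hc' : 0 < ‖c‖ := norm_pos_iff.2 hc
  refine limsup_ofReal_rpow_inv_le (C := T + 1) (by linarith) (by positivity) fun m => ?_
  rw [inv_pow, ← div_eq_mul_inv, le_div_iff₀ (by positivity), mul_comm]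
  calc ‖c‖ ^ m * rnorm ρ (A m)
      ≤ ‖c‖ ^ m * ∑ α : MIdx n m, ∑ α' : MIdx n' q', ‖A m α α'‖ / mfact α.1 := by
        gcongr; exact rnorm_le_sum_norm_div_mfact hρ (A m)
    _ ≤ T := pow_mul_sum_norm_div_mfact_le_tsum habs m
    _ ≤ T + 1 := by linarith

theorem vnormE_const (hn : 0 < n) {ϱ : ℝ≥0∞} (hϱ : ϱ ≠ 0) (c : F) :
    vnormE ϱ (fun _ : Fin n => c) = (n : ℝ) ^ (1 / ϱ).toReal * ‖c‖ := by
  have : Nonempty (Fin n) := ⟨⟨0, hn⟩⟩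
  rw [vnormE]
  split_ifs with hϱ_top
  · simp [hϱ_top]
  · have hσ : 0 < ϱ.toReal := ENNReal.toReal_pos hϱ hϱ_top
    rw [Finset.sum_const, Finset.card_univ, Fintype.card_fin, nsmul_eq_mul,
      Real.mul_rpow (by positivity) (by positivity), ← Real.rpow_mul (norm_nonneg c),
      mul_one_div_cancel hσ.ne', Real.rpow_one, ENNReal.toReal_div, ENNReal.toReal_one]

end AbsConv

theorem ENNReal.toReal_one_div_of_one_div_ofReal_add_one_div_eq_one {ρ : ℝ} (hρ : 0 < ρ)
    {ϱ : ℝ≥0∞} (hconj : 1 / ENNReal.ofReal ρ + 1 / ϱ = 1) : (1 / ϱ).toReal = (ρ - 1) / ρ := by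
  have hϱ : 1 / ϱ ≠ ∞ := ne_top_of_le_ne_top ENNReal.one_ne_top (le_add_self.trans_eq hconj)
  have h := congrArg ENNReal.toReal hconj
  rw [ENNReal.toReal_add (by simp [hρ]) hϱ, ENNReal.toReal_div, ENNReal.toReal_one,
    ENNReal.toReal_ofReal hρ.le] at h
  rw [eq_sub_of_add_eq' h]
  field_simp

theorem exists_not_absConv_general {n n' q' : ℕ} {F : Type*} [RCLike F] (hn : 0 < n)
    (ρ : ℝ) (hρ : 1 ≤ ρ) (ϱ : ℝ≥0∞) (hconj : 1 / ENNReal.ofReal ρ + 1 / ϱ = 1)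
    (A : (m : ℕ) → MMat n n' m q' F)
    (hR : 1 / convRadiusInv ρ A ≠ ∞) (R₁ : ℝ)
    (hR₁ : (1 / convRadiusInv ρ A).toReal * (n : ℝ) ^ ((ρ - 1) / ρ) < R₁) :
    ∃ hb : Fin n → F, vnormE ϱ hb = R₁ ∧ ¬ AbsConvAt A hb := by
  have hϱ : ϱ ≠ 0 := by rintro rfl; simp at hconj
  have hN : 0 < (n : ℝ) ^ ((ρ - 1) / ρ) := by positivity
  set t := R₁ / (n : ℝ) ^ ((ρ - 1) / ρ)
  have htR : (1 / convRadiusInv ρ A).toReal < t := (lt_div_iff₀ hN).2 hR₁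
  have ht : 0 < t := ENNReal.toReal_nonneg.trans_lt htR
  refine ⟨fun _ => (t : F), ?_, fun habs => htR.not_ge ?_⟩
  · rw [vnormE_const hn hϱ, ENNReal.toReal_one_div_of_one_div_ofReal_add_one_div_eq_one
      (by linarith) hconj, RCLike.norm_ofReal, abs_of_pos ht]
    exact mul_div_cancel₀ R₁ hN.ne'
  · have hr := convRadiusInv_le_of_absConvAt_const hρ (by simpa using ht.ne') habs
    rw [RCLike.norm_ofReal, abs_of_pos ht, ENNReal.ofReal_inv_of_pos ht] at hr
    rw [← ENNReal.ofReal_le_iff_le_toReal hR, one_div]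
    exact ENNReal.le_inv_iff_le_inv.1 hr

/-- For `1 ≤ ρ < ∞` with conjugate exponent `ϱ` (computed in `ℝ≥0∞`, so `ϱ = ∞`
when `ρ = 1`), with `r = limsup_m ‖A(m)‖_ρ^{1/m}` and `R = 1/r` assumed finite, for every real
`R₁ > R·n^{(ρ−1)/ρ}` there is `h̄ ∈ F^n` with `‖h̄‖_ϱ = R₁` at which the power series
`Σ_m x^{(m)}/m!·A(m)` is not absolutely convergent. -/
theorem exists_not_absConv {n n' q' : ℕ} {F : Type*} [RCLike F] (hn : 0 < n) (hn' : 0 < n')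
    (ρ : ℝ) (hρ : 1 ≤ ρ) (ϱ : ℝ≥0∞) (hconj : 1 / ENNReal.ofReal ρ + 1 / ϱ = 1)
    (A : (m : ℕ) → MMat n n' m q' F)
    (hR : 1 / convRadiusInv ρ A ≠ ∞) (R₁ : ℝ)
    (hR₁ : (1 / convRadiusInv ρ A).toReal * (n : ℝ) ^ ((ρ - 1) / ρ) < R₁) :
    ∃ hb : Fin n → F, vnormE ϱ hb = R₁ ∧ ¬ AbsConvAt A hb :=
  exists_not_absConv_general hn ρ hρ ϱ hconj A hR R₁ hR₁

end
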